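/- Consider the random directed multigraph model with an auxiliary introduction node, with introduction PGF χ and offspring PGF μ, on nodes {0,1,...,N}, and for 0 ≤ k ≤ N let q_k be the probability that the out-component of node 0 contains exactly k nodes other than node 0. For every M with 1 ≤ M ≤ N: χ(M/N) · [μ((M-1)/(N-1))]^M = ∑_{k=0}^{M} q_k · [μ((M-1)/(N-1))]^{M-k} · ∏_{j=0}^{k-1} (M-j)/(N-j), where an empty product is 1. -/

import Mathlib

open scoped Classical

/-- The weight (probability) of a realization `g` of the random directed multigraph on
nodes `{0, 1, ..., N}` with an auxiliary introduction node `0`: node `0` draws its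
out-degree from the introduction pmf `pIn` and sends each of its out-edges to a
uniformly random node of `{1, ..., N}` (with replacement); each node `u ≠ 0` draws its
out-degree from the offspring pmf `pOff` and sends each of its out-edges to a uniformly
random node of `{1, ..., N} \ {u}` (with replacement).  No edges point to node `0`. -/
noncomputable def introWeight (N : ℕ) (pIn pOff : ℕ → ℝ)
    (g : Fin (N + 1) → List (Fin (N + 1))) : ℝ :=
  (if ∀ v ∈ g 0, v ≠ 0 then
      pIn (g 0).length * (1 / (N : ℝ)) ^ (g 0).length
    else 0) *
  ∏ u ∈ Finset.univ.erase (0 : Fin (N + 1)),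
    if ∀ v ∈ g u, v ≠ u ∧ v ≠ 0 then
      pOff (g u).length * (1 / ((N : ℝ) - 1)) ^ (g u).length
    else 0

/-- Probability of an event in the random multigraph model with an introduction node. -/
noncomputable def introProb (N : ℕ) (pIn pOff : ℕ → ℝ)
    (E : Set (Fin (N + 1) → List (Fin (N + 1)))) : ℝ :=
  ∑' g : Fin (N + 1) → List (Fin (N + 1)), Set.indicator E (introWeight N pIn pOff) g

/-- The out-component of the auxiliary node `0`. -/
def introOutComp (N : ℕ) (g : Fin (N + 1) → List (Fin (N + 1))) : Set (Fin (N + 1)) :=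
  {v | Relation.ReflTransGen (fun a b => b ∈ g a) 0 v}

/-- `introQProb N pIn pOff k` is the probability that the out-component of node `0`
contains exactly `k` nodes other than node `0` itself. -/
noncomputable def introQProb (N : ℕ) (pIn pOff : ℕ → ℝ) (k : ℕ) : ℝ :=
  introProb N pIn pOff {g | ((introOutComp N g) \ {0}).ncard = k}

open scoped ENNReal
open Finset

/-!
Fix `S ⊆ {1, …, N}` with `#S = M` and let `A` be the event that every edge leaving `0` or a
node of `S` ends in `S`. The out-lists of the nodes are independent, so
`P(A) = χ(M/N) μ((M-1)/(N-1))^M`. On the other hand `A` holds iff the out-component `C` of `0`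
satisfies `C \ {0} ⊆ S` and every node of `S \ C` sends all its edges into `S`. Whether
`C \ {0} = c` is decided by the out-lists of `0` and of the nodes of `c` alone, so given it the
nodes of `S \ c` still choose independently, each contributing a factor `μ((M-1)/(N-1))`.
Relabelling the nodes `1, …, N` preserves the model, hence `P(C \ {0} = c) = q_#c / (N choose #c)`,
and summing over `c ⊆ S` gives the identity since `(M choose k) / (N choose k)` is the product
`∏_{j<k} (M-j)/(N-j)`.
-/

theorem summable_of_tsum_ne_zero {α M : Type*} [AddCommMonoid M] [TopologicalSpace M]
    {f : α → M} (h : ∑' a, f a ≠ 0) : Summable f := by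
  by_contra hf
  exact h (tsum_eq_zero_of_not_summable hf)

theorem Finset.exists_perm_fix_map_eq {α : Type*} [Fintype α] [DecidableEq α] {s t : Finset α}
    {a : α} (hs : a ∉ s) (ht : a ∉ t) (hst : #s = #t) :
    ∃ σ : Equiv.Perm α, σ a = a ∧ s.map σ.toEmbedding = t := by
  let π := (s.equivOfCardEq hst).extendSubtype
  refine ⟨π.trans (Equiv.swap (π a) a), by simp,
    eq_of_subset_of_card_le (fun y hy => ?_) (by simp [hst])⟩
  obtain ⟨x, hx, rfl⟩ := mem_map.mp hy
  have hπx : π x ∈ t := (s.equivOfCardEq hst).extendSubtype_mem x hx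
  rw [Equiv.coe_toEmbedding, Equiv.trans_apply, Equiv.swap_apply_of_ne_of_ne
    (π.injective.ne (ne_of_mem_of_not_mem hx hs)) (ne_of_mem_of_not_mem hπx ht)]
  exact hπx

theorem Nat.cast_choose_div_cast_choose (M N k : ℕ) :
    (M.choose k : ℝ) / N.choose k = ∏ j ∈ range k, ((M : ℝ) - j) / ((N : ℝ) - j) := by
  rw [prod_div_distrib, ← descPochhammer_eval_eq_prod_range, ← descPochhammer_eval_eq_prod_range,
    descPochhammer_eval_eq_descFactorial, descPochhammer_eval_eq_descFactorial,
    Nat.descFactorial_eq_factorial_mul_choose, Nat.descFactorial_eq_factorial_mul_choose]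
  push_cast
  rw [mul_div_mul_left _ _ (by positivity)]

section ProductWeight

variable {ι β : Type*}

theorem tsum_fin_pi_prod : ∀ {n : ℕ} (f : Fin n → β → ℝ≥0∞),
    ∑' g : Fin n → β, ∏ i, f i (g i) = ∏ i, ∑' b, f i b
  | 0, f => by simp
  | n + 1, f => by
    rw [← (Fin.consEquiv fun _ => β).tsum_eq, ENNReal.tsum_prod', Fin.prod_univ_succ,
      ← tsum_fin_pi_prod (fun i => f i.succ), ← ENNReal.tsum_mul_right]
    simp [Fin.consEquiv, Fin.prod_univ_succ, ENNReal.tsum_mul_left]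

variable [Fintype ι]

theorem tsum_pi_prod (f : ι → β → ℝ≥0∞) :
    ∑' g : ι → β, ∏ i, f i (g i) = ∏ i, ∑' b, f i b := by
  let e := Fintype.equivFin ι
  rw [← (e.symm.arrowCongr (Equiv.refl β)).tsum_eq, ← e.symm.prod_comp]
  simpa [← e.symm.prod_comp] using tsum_fin_pi_prod (fun j => f (e.symm j))
theorem tsum_restrict_mul_prod_compl [DecidableEq ι] (T : Finset ι) (φ : (T → β) → ℝ≥0∞)
    (f : ι → β → ℝ≥0∞) :
    ∑' g : ι → β, φ (T.restrict g) * ∏ i ∈ Tᶜ, f i (g i) = (∑' h, φ h) * ∏ i ∈ Tᶜ, ∑' b, f i b := by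
  let e := (Equiv.piEquivPiSubtypeProd (· ∈ T) fun _ => β).symm
  have hsplit : ∀ a b, φ (T.restrict (e (a, b))) * ∏ i ∈ Tᶜ, f i (e (a, b) i)
      = φ a * ∏ j : {i // i ∉ T}, f j (b j) := by
    intro a b
    rw [prod_subtype Tᶜ (fun _ => mem_compl)]
    congr 1
    · congr 1; ext i; simp [e, i.2]
    · refine prod_congr rfl fun i _ => ?_
      simp [e, i.2]
  rw [← e.tsum_eq, ENNReal.tsum_prod']
  simp_rw [hsplit, ENNReal.tsum_mul_left, tsum_pi_prod, ENNReal.tsum_mul_right,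
    prod_subtype Tᶜ (fun _ => mem_compl) (fun i => ∑' b, f i b)]

noncomputable def piWeight (w : ι → β → ℝ≥0∞) (g : ι → β) : ℝ≥0∞ := ∏ i, w i (g i)

noncomputable def piProb (w : ι → β → ℝ≥0∞) (E : Set (ι → β)) : ℝ≥0∞ :=
  ∑' g, E.indicator (piWeight w) g

variable {w : ι → β → ℝ≥0∞}

theorem piProb_univ (hw : ∀ i, ∑' b, w i b = 1) : piProb w Set.univ = 1 := by
  simp [piProb, piWeight, tsum_pi_prod, hw]

theorem piProb_le_one (hw : ∀ i, ∑' b, w i b = 1) (E : Set (ι → β)) : piProb w E ≤ 1 :=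
  (ENNReal.tsum_le_tsum (E.indicator_le_self _)).trans_eq (by simpa [piProb] using piProb_univ hw)

theorem piProb_preimage_equiv (Ψ : (ι → β) ≃ (ι → β)) (hΨ : ∀ g, piWeight w (Ψ g) = piWeight w g)
    (E : Set (ι → β)) : piProb w (Ψ ⁻¹' E) = piProb w E := by
  unfold piProb
  conv_rhs => rw [← Ψ.tsum_eq]
  congr 1 with g
  simp [Set.indicator_apply, hΨ]

theorem piProb_eq_sum_inter {γ : Type*} (f : (ι → β) → γ) (I : Finset γ) {E : Set (ι → β)}
    (hf : ∀ g ∈ E, f g ∈ I) : piProb w E = ∑ c ∈ I, piProb w (E ∩ {g | f g = c}) := by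
  simp only [piProb]
  rw [← Summable.tsum_finsetSum fun _ _ => ENNReal.summable]
  congr 1 with g
  by_cases hg : g ∈ E
  · rw [sum_eq_single_of_mem (f g) (hf g hg)]
    · simp [hg]
    · intro c _ hc
      simp [Ne.symm hc]
  · simp [hg]

theorem indicator_forall_mem_prod [DecidableEq ι] {U R : Finset ι} (hRU : R ⊆ U)
    (F : ι → Set β) (g : ι → β) :
    {g : ι → β | ∀ i ∈ R, g i ∈ F i}.indicator (fun g => ∏ i ∈ U, w i (g i)) g
      = ∏ i ∈ U, R.piecewise (fun i => (F i).indicator (w i)) w i (g i) := by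
  by_cases hg : ∀ i ∈ R, g i ∈ F i
  · rw [Set.indicator_of_mem (show g ∈ {g | ∀ i ∈ R, g i ∈ F i} from hg)]
    refine prod_congr rfl fun i _ => ?_
    by_cases hi : i ∈ R <;> simp [hi, hg]
  · obtain ⟨i, hi, hgi⟩ := not_forall₂.mp hg
    rw [Set.indicator_of_notMem (show g ∉ {g | ∀ i ∈ R, g i ∈ F i} from hg),
      prod_eq_zero (hRU hi) (by simp [hi, hgi])]

theorem piProb_inter_forall_mem [DecidableEq ι] (hw : ∀ i, ∑' b, w i b = 1) {E : Set (ι → β)}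
    {T R : Finset ι} (hE : DependsOn (· ∈ E) T) (hRT : Disjoint R T) (F : ι → Set β) :
    piProb w (E ∩ {g | ∀ i ∈ R, g i ∈ F i})
      = piProb w E * ∏ i ∈ R, ∑' b, (F i).indicator (w i) b := by
  obtain ⟨φ, hφ⟩ : ∃ φ : (T → β) → ℝ≥0∞,
      ∀ g, E.indicator (fun g => ∏ i ∈ T, w i (g i)) g = φ (T.restrict g) := by
    obtain ⟨φ, hφ⟩ := (dependsOn_iff_exists_comp (s := T)
      (f := fun g => E.indicator (fun g => ∏ i ∈ T, w i (g i)) g)).mp fun g g' h => by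
        simp only [Set.indicator_apply, hE h, prod_congr rfl fun i hi => congrArg (w i) (h i hi)]
    exact ⟨φ, congrFun hφ⟩
  have key : ∀ R : Finset ι, Disjoint R T → piProb w (E ∩ {g | ∀ i ∈ R, g i ∈ F i})
      = (∑' h, φ h) * ∏ i ∈ R, ∑' b, (F i).indicator (w i) b := by
    intro R hRT
    have hRTc : R ⊆ Tᶜ := subset_compl_iff_disjoint_right.mpr hRT
    have hpoint : ∀ g, (E ∩ {g | ∀ i ∈ R, g i ∈ F i}).indicator (piWeight w) g
        = φ (T.restrict g) * ∏ i ∈ Tᶜ, R.piecewise (fun i => (F i).indicator (w i)) w i (g i) := by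
      intro g
      rw [← indicator_forall_mem_prod hRTc, ← hφ, ← Set.inter_indicator_mul]
      simp only [prod_mul_prod_compl]
      rfl
    rw [piProb, tsum_congr hpoint, tsum_restrict_mul_prod_compl]
    simp only [Finset.piecewise, apply_ite (fun f : β → ℝ≥0∞ => ∑' b, f b), hw, prod_ite_mem,
      inter_eq_right.mpr hRTc]
  have hE1 : piProb w E = ∑' h, φ h := by simpa using key ∅ (disjoint_empty_left T)
  rw [key R hRT, hE1]

end ProductWeight

section ListWeight

variable {V W : Type*} [DecidableEq V] {p : ℕ → ℝ} {d : ℝ}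

variable (p d) in
noncomputable def listWeight (A : Finset V) (l : List V) : ℝ≥0∞ :=
  if ∀ v ∈ l, v ∈ A then ENNReal.ofReal (p l.length * (1 / d) ^ l.length) else 0

theorem indicator_listWeight (A K : Finset V) :
    {l : List V | ∀ v ∈ l, v ∈ K}.indicator (listWeight p d A) = listWeight p d (A ∩ K) := by
  ext l
  simp only [Set.indicator_apply, Set.mem_ofPred_eq, listWeight, mem_inter, forall₂_and]
  by_cases hK : ∀ v ∈ l, v ∈ K
  · rw [if_pos hK]
    exact if_congr (and_iff_left hK).symm rfl rfl
  · rw [if_neg hK, if_neg fun h => hK h.2]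

theorem listWeight_map [DecidableEq W] {A : Finset V} {B : Finset W} {σ : V → W}
    (hσ : ∀ v, σ v ∈ B ↔ v ∈ A) (l : List V) : listWeight p d B (l.map σ) = listWeight p d A l := by
  simp [listWeight, hσ]

theorem tsum_listWeight [Fintype V] (hp0 : ∀ n, 0 ≤ p n) (hp : Summable p) (hd : 0 < d)
    {A : Finset V} (hA : (#A : ℝ) ≤ d) :
    ∑' l, listWeight p d A l = ENNReal.ofReal (∑' n, p n * (#A / d) ^ n) := by
  have hx0 : 0 ≤ (#A : ℝ) / d := by positivity
  have hx1 : (#A : ℝ) / d ≤ 1 := (div_le_one hd).mpr hA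
  have hterm : ∀ n, 0 ≤ p n * (#A / d) ^ n := fun n => mul_nonneg (hp0 n) (pow_nonneg hx0 n)
  rw [ENNReal.ofReal_tsum_of_nonneg hterm (hp.of_nonneg_of_le hterm fun n =>
      mul_le_of_le_one_right (hp0 n) (pow_le_one₀ hx0 hx1)),
    ← List.equivSigmaTuple.symm.tsum_eq, ENNReal.tsum_sigma']
  congr 1 with n
  have hword : ∀ t : Fin n → V, listWeight p d A (List.equivSigmaTuple.symm ⟨n, t⟩)
      = if t ∈ Fintype.piFinset fun _ => A then ENNReal.ofReal (p n * (1 / d) ^ n) else 0 :=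
    fun t => by simp [listWeight]
  simp_rw [hword, tsum_fintype, sum_ite_mem, univ_inter, sum_const, Fintype.card_piFinset_const,
    nsmul_eq_mul]
  rw [← ENNReal.ofReal_natCast, ← ENNReal.ofReal_mul (by positivity)]
  congr 1
  push_cast
  ring

theorem tsum_listWeight_of_card_eq [Fintype V] (hp0 : ∀ n, 0 ≤ p n) (hp1 : ∑' n, p n = 1)
    (hd : 0 < d) {A : Finset V} (hA : (#A : ℝ) = d) : ∑' l, listWeight p d A l = 1 := by
  simp [tsum_listWeight hp0 (summable_of_tsum_ne_zero (by simp [hp1])) hd hA.le, hA, hd.ne', hp1]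

end ListWeight

section Model

variable {N : ℕ} {pIn pOff : ℕ → ℝ}

variable (N pIn pOff) in
/-- The factors of `introWeight`, one per node, valued in `ℝ≥0∞` so that sums over
configurations need no summability side conditions. -/
noncomputable def nodeWeight (u : Fin (N + 1)) : List (Fin (N + 1)) → ℝ≥0∞ :=
  if u = 0 then listWeight pIn N {0}ᶜ else listWeight pOff ((N : ℝ) - 1) {0, u}ᶜ

theorem ofReal_introWeight (hN : 1 ≤ N) (hIn0 : ∀ ℓ, 0 ≤ pIn ℓ) (hOff0 : ∀ ℓ, 0 ≤ pOff ℓ)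
    (g : Fin (N + 1) → List (Fin (N + 1))) :
    ENNReal.ofReal (introWeight N pIn pOff g) = piWeight (nodeWeight N pIn pOff) g := by
  have hN1 : (0 : ℝ) ≤ (N : ℝ) - 1 := by
    rw [sub_nonneg]; exact_mod_cast hN
  rw [introWeight, piWeight, ← mul_prod_erase univ _ (mem_univ 0), ENNReal.ofReal_mul
    (by split_ifs <;> first | positivity | exact mul_nonneg (hIn0 _) (by positivity)),
    ENNReal.ofReal_prod_of_nonneg fun u _ => by
      split_ifs <;> first | positivity | exact mul_nonneg (hOff0 _) (by positivity)]
  congr 1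
  · simp [nodeWeight, listWeight, apply_ite ENNReal.ofReal]
  · refine prod_congr rfl fun u hu => ?_
    simp [nodeWeight, listWeight, ne_of_mem_erase hu, apply_ite ENNReal.ofReal, and_comm]

theorem introWeight_nonneg (hN : 1 ≤ N) (hIn0 : ∀ ℓ, 0 ≤ pIn ℓ) (hOff0 : ∀ ℓ, 0 ≤ pOff ℓ)
    (g : Fin (N + 1) → List (Fin (N + 1))) : 0 ≤ introWeight N pIn pOff g := by
  have hN1 : (0 : ℝ) ≤ (N : ℝ) - 1 := by
    rw [sub_nonneg]; exact_mod_cast hN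
  refine mul_nonneg ?_ (prod_nonneg fun u _ => ?_) <;> split_ifs <;>
    first | exact le_rfl | exact mul_nonneg (hIn0 _) (by positivity) |
      exact mul_nonneg (hOff0 _) (by positivity)

theorem introProb_eq_toReal_piProb (hN : 1 ≤ N) (hIn0 : ∀ ℓ, 0 ≤ pIn ℓ)
    (hOff0 : ∀ ℓ, 0 ≤ pOff ℓ) (E : Set (Fin (N + 1) → List (Fin (N + 1)))) :
    introProb N pIn pOff E = (piProb (nodeWeight N pIn pOff) E).toReal := by
  rw [piProb, ENNReal.tsum_toReal_eq fun g => ?_]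
  · refine tsum_congr fun g => ?_
    by_cases hg : g ∈ E
    · simp [hg, ← ofReal_introWeight hN hIn0 hOff0, introWeight_nonneg hN hIn0 hOff0]
    · simp [hg]
  · by_cases hg : g ∈ E
    · simp [hg, ← ofReal_introWeight hN hIn0 hOff0]
    · simp [hg]

theorem card_compl_zero : #({0}ᶜ : Finset (Fin (N + 1))) = N := by
  simp [card_compl]

theorem card_compl_pair {u : Fin (N + 1)} (hu : u ≠ 0) :
    (#({0, u}ᶜ : Finset (Fin (N + 1))) : ℝ) = N - 1 := by
  rw [card_compl, card_pair hu.symm, Fintype.card_fin, Nat.cast_sub (by omega)]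
  push_cast
  ring

theorem tsum_nodeWeight (hN : 2 ≤ N) (hIn0 : ∀ ℓ, 0 ≤ pIn ℓ) (hInsum : ∑' ℓ, pIn ℓ = 1)
    (hOff0 : ∀ ℓ, 0 ≤ pOff ℓ) (hOffsum : ∑' ℓ, pOff ℓ = 1) (u : Fin (N + 1)) :
    ∑' l, nodeWeight N pIn pOff u l = 1 := by
  have hN1 : (0 : ℝ) < (N : ℝ) - 1 := by
    rw [sub_pos]; exact_mod_cast hN
  by_cases hu : u = 0
  · simp only [nodeWeight, if_pos hu]
    exact tsum_listWeight_of_card_eq hIn0 hInsum (by positivity) (by simp [card_compl_zero])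
  · simp only [nodeWeight, if_neg hu]
    exact tsum_listWeight_of_card_eq hOff0 hOffsum hN1 (card_compl_pair hu)

theorem tsum_indicator_nodeWeight_zero (hN : 1 ≤ N) (hIn0 : ∀ ℓ, 0 ≤ pIn ℓ)
    (hInsum : ∑' ℓ, pIn ℓ = 1) {S : Finset (Fin (N + 1))} (hS : 0 ∉ S) :
    ∑' l, {l | ∀ v ∈ l, v ∈ insert 0 S}.indicator (nodeWeight N pIn pOff 0) l
      = ENNReal.ofReal (∑' n, pIn n * (#S / N) ^ n) := by
  have hS' : {0}ᶜ ∩ insert 0 S = S := by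
    ext v; by_cases hv : v = 0 <;> simp [hv, hS]
  rw [nodeWeight, if_pos rfl, indicator_listWeight, hS']
  refine tsum_listWeight hIn0 (summable_of_tsum_ne_zero (by simp [hInsum]))
    (Nat.cast_pos.mpr hN) ?_
  have := card_le_card (hS'.symm.subset.trans inter_subset_left)
  rw [card_compl_zero] at this
  exact_mod_cast this

theorem tsum_indicator_nodeWeight_of_mem (hN : 2 ≤ N) (hOff0 : ∀ ℓ, 0 ≤ pOff ℓ)
    (hOffsum : ∑' ℓ, pOff ℓ = 1) {S : Finset (Fin (N + 1))} (hS : 0 ∉ S)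
    {u : Fin (N + 1)} (hu : u ∈ S) :
    ∑' l, {l | ∀ v ∈ l, v ∈ insert 0 S}.indicator (nodeWeight N pIn pOff u) l
      = ENNReal.ofReal (∑' n, pOff n * ((#S - 1) / (N - 1)) ^ n) := by
  have hu0 : u ≠ 0 := ne_of_mem_of_not_mem hu hS
  have hS' : {0, u}ᶜ ∩ insert 0 S = S.erase u := by
    ext v; by_cases hv : v = 0 <;> by_cases hvu : v = u <;> simp [hv, hvu, hS]
  have hcard : (#(S.erase u) : ℝ) = #S - 1 := by
    rw [card_erase_of_mem hu, Nat.cast_pred (card_pos.mpr ⟨u, hu⟩)]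
  have hN1 : (0 : ℝ) < (N : ℝ) - 1 := by
    rw [sub_pos]; exact_mod_cast hN
  rw [nodeWeight, if_neg hu0, indicator_listWeight, hS', ← hcard]
  refine tsum_listWeight hOff0 (summable_of_tsum_ne_zero (by simp [hOffsum])) hN1 ?_
  rw [← card_compl_pair hu0]
  exact_mod_cast card_le_card (hS'.symm.subset.trans inter_subset_left)

theorem nodeWeight_map {σ : Equiv.Perm (Fin (N + 1))} (hσ : σ 0 = 0) (u : Fin (N + 1))
    (l : List (Fin (N + 1))) :
    nodeWeight N pIn pOff (σ u) (l.map σ) = nodeWeight N pIn pOff u l := by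
  have h0 : ∀ v, σ v = 0 ↔ v = 0 := fun v => σ.injective.eq_iff' hσ
  by_cases hu : u = 0
  · simp only [nodeWeight, hu, hσ]
    exact listWeight_map (by simp [h0]) l
  · simp only [nodeWeight, if_neg hu, if_neg ((h0 u).not.mpr hu)]
    exact listWeight_map (by simp [h0]) l

end Model

section OutComponent

variable {N : ℕ} {g g' : Fin (N + 1) → List (Fin (N + 1))}

theorem zero_mem_introOutComp : (0 : Fin (N + 1)) ∈ introOutComp N g :=
  Relation.ReflTransGen.refl

theorem mem_introOutComp_of_mem {u v : Fin (N + 1)} (hu : u ∈ introOutComp N g) (hv : v ∈ g u) :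
    v ∈ introOutComp N g :=
  Relation.ReflTransGen.tail hu hv

theorem introOutComp_subset {K : Set (Fin (N + 1))} (h0 : 0 ∈ K)
    (hK : ∀ u ∈ K, ∀ v ∈ g u, v ∈ K) : introOutComp N g ⊆ K := fun _ hv => by
  induction hv with
  | refl => exact h0
  | tail _ hstep ih => exact hK _ ih _ hstep

theorem introOutComp_eq_of_eqOn (h : ∀ u ∈ introOutComp N g, g' u = g u) :
    introOutComp N g' = introOutComp N g := by
  refine (introOutComp_subset zero_mem_introOutComp fun u hu v hv =>
    mem_introOutComp_of_mem hu (h u hu ▸ hv)).antisymm fun v hv => ?_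
  induction hv with
  | refl => exact zero_mem_introOutComp
  | tail hreach hstep ih => exact mem_introOutComp_of_mem ih ((h _ hreach).symm ▸ hstep)

variable (N) in
noncomputable def reached (g : Fin (N + 1) → List (Fin (N + 1))) : Finset (Fin (N + 1)) :=
  (introOutComp N g \ {0}).toFinset

theorem zero_notMem_reached : 0 ∉ reached N g := by
  simp [reached]

theorem mem_insert_zero_reached {v : Fin (N + 1)} :
    v ∈ insert 0 (reached N g) ↔ v ∈ introOutComp N g := by
  by_cases hv : v = 0
  · simp [hv, zero_mem_introOutComp]
  · simp [reached, hv]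

theorem reached_eq_of_eqOn {c : Finset (Fin (N + 1))} (hg : reached N g = c)
    (h : ∀ u ∈ insert 0 c, g' u = g u) : reached N g' = c := by
  have hC : introOutComp N g' = introOutComp N g := by
    refine introOutComp_eq_of_eqOn fun u hu => h u ?_
    rwa [← hg, mem_insert_zero_reached]
  rw [← hg, reached, reached, hC]

theorem dependsOn_reached_eq (c : Finset (Fin (N + 1))) :
    DependsOn (· ∈ {g | reached N g = c}) ↑(insert 0 c) := fun _ _ h =>
  propext ⟨fun hg => reached_eq_of_eqOn hg fun u hu => (h u hu).symm,
    fun hg' => reached_eq_of_eqOn hg' h⟩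

theorem forall_mem_insert_zero_iff {S : Finset (Fin (N + 1))} :
    (∀ u ∈ insert 0 S, ∀ v ∈ g u, v ∈ insert 0 S) ↔
      reached N g ⊆ S ∧ ∀ u ∈ S \ reached N g, ∀ v ∈ g u, v ∈ insert 0 S := by
  constructor
  · intro h
    refine ⟨fun v hv => ?_, fun u hu => h u (mem_insert_of_mem (mem_sdiff.mp hu).1)⟩
    have hvS : v ∈ insert 0 S := introOutComp_subset (K := ↑(insert 0 S)) (mem_insert_self 0 S) h
      (mem_insert_zero_reached.mp (mem_insert_of_mem hv))
    exact (mem_insert.mp hvS).resolve_left (ne_of_mem_of_not_mem hv zero_notMem_reached)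
  · rintro ⟨hsub, hrest⟩ u hu v hv
    by_cases huC : u ∈ introOutComp N g
    · exact insert_subset_insert 0 hsub
        (mem_insert_zero_reached.mpr (mem_introOutComp_of_mem huC hv))
    · have hu0 : u ≠ 0 := fun h => huC (h ▸ zero_mem_introOutComp)
      refine hrest u (mem_sdiff.mpr ⟨(mem_insert.mp hu).resolve_left hu0, fun h => huC ?_⟩) v hv
      exact mem_insert_zero_reached.mp (mem_insert_of_mem h)

end OutComponent

section Relabel

variable {N : ℕ} {pIn pOff : ℕ → ℝ} {σ : Equiv.Perm (Fin (N + 1))}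

variable (N) in
def relabel (σ : Equiv.Perm (Fin (N + 1))) :
    (Fin (N + 1) → List (Fin (N + 1))) ≃ (Fin (N + 1) → List (Fin (N + 1))) :=
  σ.arrowCongr (Equiv.listEquivOfEquiv σ)

theorem relabel_apply (g : Fin (N + 1) → List (Fin (N + 1))) (u : Fin (N + 1)) :
    relabel N σ g u = (g (σ.symm u)).map σ :=
  rfl

theorem piWeight_relabel (hσ : σ 0 = 0) (g : Fin (N + 1) → List (Fin (N + 1))) :
    piWeight (nodeWeight N pIn pOff) (relabel N σ g) = piWeight (nodeWeight N pIn pOff) g := by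
  rw [piWeight, piWeight, ← Equiv.prod_comp σ]
  simp [relabel_apply, nodeWeight_map hσ]

theorem mem_introOutComp_relabel (hσ : σ 0 = 0) (g : Fin (N + 1) → List (Fin (N + 1)))
    (v : Fin (N + 1)) : σ v ∈ introOutComp N (relabel N σ g) ↔ v ∈ introOutComp N g := by
  have hσ' : σ.symm 0 = 0 := by rw [Equiv.symm_apply_eq, hσ]
  constructor
  · intro h
    simpa [Function.onFun, introOutComp, hσ'] using
      Relation.ReflTransGen.lift (p := fun a b => b ∈ g a) σ.symm (fun a b hab => by
        obtain ⟨x, hx, rfl⟩ := List.mem_map.mp hab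
        simpa [Function.onFun] using hx) _ _ h
  · intro h
    simpa [Function.onFun, introOutComp, hσ] using
      Relation.ReflTransGen.lift (p := fun a b => b ∈ relabel N σ g a) σ
        (fun a b hab => by simpa [Function.onFun, relabel_apply] using hab) _ _ h

theorem reached_relabel (hσ : σ 0 = 0) (g : Fin (N + 1) → List (Fin (N + 1))) :
    reached N (relabel N σ g) = (reached N g).map σ.toEmbedding := by
  ext v
  obtain ⟨w, rfl⟩ := σ.surjective v
  simp [reached, mem_introOutComp_relabel hσ, σ.injective.eq_iff' hσ]

theorem piProb_reached_eq_of_card_eq {c c' : Finset (Fin (N + 1))} (hc : 0 ∉ c) (hc' : 0 ∉ c')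
    (hcc' : #c = #c') :
    piProb (nodeWeight N pIn pOff) {g | reached N g = c}
      = piProb (nodeWeight N pIn pOff) {g | reached N g = c'} := by
  obtain ⟨σ, hσ, rfl⟩ := exists_perm_fix_map_eq hc hc' hcc'
  rw [← piProb_preimage_equiv (relabel N σ) (piWeight_relabel hσ)
    {g | reached N g = c.map σ.toEmbedding}]
  congr 1
  ext g
  simp [reached_relabel hσ]

end Relabel

section ClosedSets

variable {N : ℕ} {pIn pOff : ℕ → ℝ}

-- Edges into `0` have weight zero; allowing them makes closedness of `insert 0 S` under `g`
-- a statement about the out-component alone (`forall_mem_insert_zero_iff`).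
theorem piProb_closed (hN : 2 ≤ N) (hIn0 : ∀ ℓ, 0 ≤ pIn ℓ) (hInsum : ∑' ℓ, pIn ℓ = 1)
    (hOff0 : ∀ ℓ, 0 ≤ pOff ℓ) (hOffsum : ∑' ℓ, pOff ℓ = 1) {S : Finset (Fin (N + 1))}
    (hS : 0 ∉ S) :
    piProb (nodeWeight N pIn pOff) {g | ∀ u ∈ insert 0 S, ∀ v ∈ g u, v ∈ insert 0 S}
      = ENNReal.ofReal (∑' n, pIn n * (#S / N) ^ n)
        * ENNReal.ofReal (∑' n, pOff n * ((#S - 1) / (N - 1)) ^ n) ^ #S := by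
  have hw := tsum_nodeWeight hN hIn0 hInsum hOff0 hOffsum
  have h := piProb_inter_forall_mem hw (E := Set.univ) (T := ∅) (R := insert 0 S)
    (fun _ _ _ => rfl) (disjoint_empty_right _) (fun _ => {l | ∀ v ∈ l, v ∈ insert 0 S})
  rw [Set.univ_inter, piProb_univ hw, one_mul, prod_insert hS,
    tsum_indicator_nodeWeight_zero (by omega) hIn0 hInsum hS,
    prod_congr rfl fun u hu => tsum_indicator_nodeWeight_of_mem hN hOff0 hOffsum hS hu,
    prod_const] at h
  exact h

theorem piProb_closed_eq_sum (hN : 2 ≤ N) (hIn0 : ∀ ℓ, 0 ≤ pIn ℓ) (hInsum : ∑' ℓ, pIn ℓ = 1)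
    (hOff0 : ∀ ℓ, 0 ≤ pOff ℓ) (hOffsum : ∑' ℓ, pOff ℓ = 1) {S : Finset (Fin (N + 1))}
    (hS : 0 ∉ S) :
    piProb (nodeWeight N pIn pOff) {g | ∀ u ∈ insert 0 S, ∀ v ∈ g u, v ∈ insert 0 S}
      = ∑ c ∈ S.powerset, piProb (nodeWeight N pIn pOff) {g | reached N g = c}
          * ENNReal.ofReal (∑' n, pOff n * ((#S - 1) / (N - 1)) ^ n) ^ (#S - #c) := by
  rw [piProb_eq_sum_inter (reached N) S.powerset
    (E := {g | ∀ u ∈ insert 0 S, ∀ v ∈ g u, v ∈ insert 0 S}) fun g hg =>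
      mem_powerset.mpr (forall_mem_insert_zero_iff.mp hg).1]
  refine sum_congr rfl fun c hc => ?_
  have hcS := mem_powerset.mp hc
  have hE : {g | ∀ u ∈ insert 0 S, ∀ v ∈ g u, v ∈ insert 0 S} ∩ {g | reached N g = c}
      = {g | reached N g = c} ∩ {g | ∀ u ∈ S \ c, g u ∈ {l | ∀ v ∈ l, v ∈ insert 0 S}} := by
    ext g
    simp only [Set.mem_inter_iff, Set.mem_ofPred_eq, forall_mem_insert_zero_iff]
    constructor
    · rintro ⟨⟨-, h⟩, rfl⟩
      exact ⟨rfl, h⟩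
    · rintro ⟨rfl, h⟩
      exact ⟨⟨hcS, h⟩, rfl⟩
  have hdisj : Disjoint (S \ c) (insert 0 c) :=
    disjoint_insert_right.mpr ⟨fun h => hS (mem_sdiff.mp h).1, sdiff_disjoint⟩
  rw [hE, piProb_inter_forall_mem (tsum_nodeWeight hN hIn0 hInsum hOff0 hOffsum)
    (dependsOn_reached_eq c) hdisj, prod_congr rfl fun u hu =>
    tsum_indicator_nodeWeight_of_mem hN hOff0 hOffsum hS (mem_sdiff.mp hu).1, prod_const,
    card_sdiff_of_subset hcS]

end ClosedSets

theorem piProb_ncard_eq {N : ℕ} {pIn pOff : ℕ → ℝ} {c : Finset (Fin (N + 1))} (hc : 0 ∉ c) :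
    piProb (nodeWeight N pIn pOff) {g | (introOutComp N g \ {0}).ncard = #c}
      = N.choose #c * piProb (nodeWeight N pIn pOff) {g | reached N g = c} := by
  have hcard : ∀ g, (introOutComp N g \ {0}).ncard = #(reached N g) := fun g =>
    Set.ncard_eq_toFinset_card' _
  rw [piProb_eq_sum_inter (reached N) (powersetCard #c {0}ᶜ)
    (E := {g | (introOutComp N g \ {0}).ncard = #c}) fun g hg => mem_powersetCard.mpr
      ⟨fun v hv => mem_compl.mpr (by simpa using ne_of_mem_of_not_mem hv zero_notMem_reached),
        (hcard g).symm.trans hg⟩]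
  rw [sum_congr rfl fun c' hc' => ?_, sum_const, card_powersetCard, card_compl_zero, nsmul_eq_mul]
  obtain ⟨hc'0, hc'c⟩ := mem_powersetCard.mp hc'
  rw [← piProb_reached_eq_of_card_eq (fun h => by simpa using hc'0 h) hc hc'c]
  congr 1
  ext g
  simp only [Set.mem_inter_iff, Set.mem_ofPred_eq, hcard]
  constructor
  · exact fun h => h.2
  · rintro rfl
    exact ⟨hc'c, rfl⟩

theorem toReal_piProb_reached_eq {N : ℕ} {pIn pOff : ℕ → ℝ} (hN : 1 ≤ N)
    (hIn0 : ∀ ℓ, 0 ≤ pIn ℓ) (hOff0 : ∀ ℓ, 0 ≤ pOff ℓ) {c : Finset (Fin (N + 1))} (hc : 0 ∉ c) :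
    (piProb (nodeWeight N pIn pOff) {g | reached N g = c}).toReal
      = introQProb N pIn pOff #c / N.choose #c := by
  have hcN : #c ≤ N := by
    simpa [card_compl_zero] using card_le_card (fun v hv => mem_compl.mpr (by
      simpa using ne_of_mem_of_not_mem hv hc) : c ⊆ {0}ᶜ)
  rw [introQProb, introProb_eq_toReal_piProb hN hIn0 hOff0, piProb_ncard_eq hc,
    ENNReal.toReal_mul, ENNReal.toReal_natCast,
    mul_div_cancel_left₀ _ (Nat.cast_ne_zero.mpr (Nat.choose_pos hcN).ne')]

theorem exists_card_eq_zero_notMem {N M : ℕ} (hMN : M ≤ N) :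
    ∃ S : Finset (Fin (N + 1)), 0 ∉ S ∧ #S = M := by
  obtain ⟨S, hS, hSM⟩ := exists_subset_card_eq (s := ({0}ᶜ : Finset (Fin (N + 1))))
    (card_compl_zero (N := N) ▸ hMN)
  exact ⟨S, fun h => by simpa using hS h, hSM⟩

theorem tsum_mul_tsum_pow_eq_sum_powerset {N : ℕ} {pIn pOff : ℕ → ℝ} (hN : 2 ≤ N) (hIn0 : ∀ ℓ, 0 ≤ pIn ℓ)
    (hInsum : ∑' ℓ, pIn ℓ = 1) (hOff0 : ∀ ℓ, 0 ≤ pOff ℓ) (hOffsum : ∑' ℓ, pOff ℓ = 1)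
    {S : Finset (Fin (N + 1))} (hS : 0 ∉ S) (hS1 : 1 ≤ #S) :
    (∑' n, pIn n * (#S / N) ^ n) * (∑' n, pOff n * ((#S - 1) / (N - 1)) ^ n) ^ #S
      = ∑ c ∈ S.powerset, introQProb N pIn pOff #c / N.choose #c
          * (∑' n, pOff n * ((#S - 1) / (N - 1)) ^ n) ^ (#S - #c) := by
  have hIn : 0 ≤ ∑' n, pIn n * (#S / N : ℝ) ^ n :=
    tsum_nonneg fun n => mul_nonneg (hIn0 n) (by positivity)
  have hOff : 0 ≤ ∑' n, pOff n * ((#S - 1) / (N - 1) : ℝ) ^ n := by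
    have : (1 : ℝ) ≤ #S := by exact_mod_cast hS1
    have : (1 : ℝ) ≤ N := by exact_mod_cast (by omega : 1 ≤ N)
    exact tsum_nonneg fun n =>
      mul_nonneg (hOff0 n) (pow_nonneg (by apply div_nonneg <;> linarith) n)
  have hw := tsum_nodeWeight hN hIn0 hInsum hOff0 hOffsum
  have key := (piProb_closed hN hIn0 hInsum hOff0 hOffsum hS).symm.trans
    (piProb_closed_eq_sum hN hIn0 hInsum hOff0 hOffsum hS)
  rw [← ENNReal.toReal_ofReal hIn, ← ENNReal.toReal_ofReal hOff, ← ENNReal.toReal_pow,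
    ← ENNReal.toReal_mul, key, ENNReal.toReal_sum fun c _ => ENNReal.mul_ne_top
      ((piProb_le_one hw _).trans_lt ENNReal.one_lt_top).ne
      (ENNReal.pow_ne_top ENNReal.ofReal_ne_top)]
  refine sum_congr rfl fun c hc => ?_
  rw [ENNReal.toReal_mul, ENNReal.toReal_pow, ENNReal.toReal_ofReal hOff,
    toReal_piProb_reached_eq (by omega) hIn0 hOff0 fun h => hS (mem_powerset.mp hc h)]

theorem multiple_introductions_triangular_system_general
    (N : ℕ) (hN : 2 ≤ N) (pIn pOff : ℕ → ℝ)
    (hIn0 : ∀ ℓ, 0 ≤ pIn ℓ) (hInsum : ∑' ℓ, pIn ℓ = 1)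
    (hOff0 : ∀ ℓ, 0 ≤ pOff ℓ) (hOffsum : ∑' ℓ, pOff ℓ = 1)
    (χ : ℝ → ℝ) (hχ : ∀ x, χ x = ∑' ℓ, pIn ℓ * x ^ ℓ)
    (μ : ℝ → ℝ) (hμ : ∀ x, μ x = ∑' ℓ, pOff ℓ * x ^ ℓ)
    (M : ℕ) (hM1 : 1 ≤ M) (hMN : M ≤ N) :
    χ ((M : ℝ) / (N : ℝ)) * (μ (((M : ℝ) - 1) / ((N : ℝ) - 1))) ^ M =
      ∑ k ∈ Finset.range (M + 1),
        introQProb N pIn pOff k *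
          (μ (((M : ℝ) - 1) / ((N : ℝ) - 1))) ^ (M - k) *
          ∏ j ∈ Finset.range k, (((M : ℝ) - j) / ((N : ℝ) - j)) := by
  obtain ⟨S, hS, rfl⟩ := exists_card_eq_zero_notMem hMN
  rw [hχ, hμ, tsum_mul_tsum_pow_eq_sum_powerset hN hIn0 hInsum hOff0 hOffsum hS hM1,
    sum_powerset_apply_card fun k => introQProb N pIn pOff k / N.choose k
      * (∑' ℓ, pOff ℓ * ((#S - 1) / (N - 1)) ^ ℓ) ^ (#S - k)]
  refine sum_congr rfl fun k _ => ?_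
  rw [nsmul_eq_mul, ← Nat.cast_choose_div_cast_choose]
  ring

theorem multiple_introductions_triangular_system
    (N : ℕ) (hN : 2 ≤ N) (pIn pOff : ℕ → ℝ)
    (hIn0 : ∀ ℓ, 0 ≤ pIn ℓ) (hIn1 : ∀ ℓ, pIn ℓ ≤ 1) (hInsum : ∑' ℓ, pIn ℓ = 1)
    (hOff0 : ∀ ℓ, 0 ≤ pOff ℓ) (hOff1 : ∀ ℓ, pOff ℓ ≤ 1) (hOffsum : ∑' ℓ, pOff ℓ = 1)
    (χ : ℝ → ℝ) (hχ : ∀ x, χ x = ∑' ℓ, pIn ℓ * x ^ ℓ)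
    (μ : ℝ → ℝ) (hμ : ∀ x, μ x = ∑' ℓ, pOff ℓ * x ^ ℓ)
    (M : ℕ) (hM1 : 1 ≤ M) (hMN : M ≤ N) :
    χ ((M : ℝ) / (N : ℝ)) * (μ (((M : ℝ) - 1) / ((N : ℝ) - 1))) ^ M =
      ∑ k ∈ Finset.range (M + 1),
        introQProb N pIn pOff k *
          (μ (((M : ℝ) - 1) / ((N : ℝ) - 1))) ^ (M - k) *
          ∏ j ∈ Finset.range k, (((M : ℝ) - j) / ((N : ℝ) - j)) :=
  multiple_introductions_triangular_system_general N hN pIn pOff hIn0 hInsum hOff0 hOffsum χ hχ μ hμ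
    M hM1 hMN
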